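/- As z → 1 within the slit plane, κ₀(z) = 1 + h(z)√(1−z) where h(z) → −√2/π, i.e., lim_{z→1} (κ₀(z) − 1)/√(1−z) = −√2/π. -/

import Mathlib

open Real Complex Filter
open scoped Topology

/-- The slit plane `ℂ \ [1,∞) \ (−∞,−1]`. -/
def Dslit : Set ℂ := {z : ℂ | ¬(z.im = 0 ∧ (1 ≤ z.re ∨ z.re ≤ -1))}

/-- Analytic extension of the degree-0 arc-cosine kernel to the slit plane. -/
noncomputable def K0C (z : ℂ) : ℂ :=
  ((Real.pi : ℂ) + Complex.I * Complex.log (z + Complex.I * ((1 - z ^ 2) ^ ((1 : ℂ) / 2))))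
    / (Real.pi : ℂ)

/-!
Write `s = √(1 - z)` and `t = √(1 + z)`. On the slit plane `arg (1 - z) + arg (1 + z)` stays in
`(-π, π]`, so the principal branches satisfy `√(1 - z²) = s t`, and `u = z + i√(1 - z²)` satisfies
`u - 1 = s (i t - s)`. Since `log u = (u - 1) g(u)` with `g = dslope log 1` continuous and
`g 1 = 1`, we get `(κ₀(z) - 1) / s = (i/π) g(u) (i t - s)`, a function continuous at `z = 1`,
whose value there is `(i/π) · i√2 = -√2/π`.
-/

namespace Complex

theorem cpow_half_sq (x : ℂ) : (x ^ ((1 : ℂ) / 2)) ^ 2 = x := by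
  simpa only [one_div] using cpow_ofNat_inv_pow x 2

theorem mul_cpow_of_arg_add_arg_mem {x y : ℂ} (hx : x ≠ 0) (hy : y ≠ 0)
    (harg : arg x + arg y ∈ Set.Ioc (-π) π) (w : ℂ) : (x * y) ^ w = x ^ w * y ^ w := by
  rw [cpow_def_of_ne_zero (mul_ne_zero hx hy), cpow_def_of_ne_zero hx, cpow_def_of_ne_zero hy,
    log_mul hx hy harg, add_mul, exp_add]

theorem two_cpow_half : (2 : ℂ) ^ ((1 : ℂ) / 2) = (√2 : ℝ) := by
  rw [Real.sqrt_eq_rpow, ofReal_cpow zero_le_two]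
  norm_num

theorem continuousAt_dslope_log_one : ContinuousAt (dslope log 1) 1 :=
  continuousAt_dslope_same.2 (differentiableAt_log one_mem_slitPlane)

theorem dslope_log_one_same : dslope log 1 1 = 1 := by
  rw [dslope_same, deriv_log one_mem_slitPlane, inv_one]

end Complex

section Dslit

variable {z : ℂ}

theorem ne_one_of_mem_Dslit (hz : z ∈ Dslit) : z ≠ 1 := by
  rintro rfl
  exact hz ⟨rfl, Or.inl le_rfl⟩

theorem ne_neg_one_of_mem_Dslit (hz : z ∈ Dslit) : z ≠ -1 := by
  rintro rfl
  exact hz ⟨by simp, Or.inr (by simp)⟩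

theorem arg_one_sub_add_arg_one_add_mem_Ioc (hz : z ∈ Dslit) :
    arg (1 - z) + arg (1 + z) ∈ Set.Ioc (-π) π := by
  have him_sub : (1 - z).im = -z.im := by simp
  have him_add : (1 + z).im = z.im := by simp
  rcases lt_trichotomy z.im 0 with him | him | him
  · have h₁ : 0 ≤ arg (1 - z) := arg_nonneg_iff.2 (by linarith)
    have h₂ : arg (1 + z) < 0 := arg_neg_iff.2 (by linarith)
    constructor <;> linarith [arg_le_pi (1 - z), neg_pi_lt_arg (1 + z)]
  · have hre : z.re < 1 ∧ -1 < z.re := by simpa [Dslit, him] using hz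
    rw [arg_eq_zero_iff.2 ⟨by simp; linarith, by simp [him]⟩,
      arg_eq_zero_iff.2 ⟨by simp; linarith, by simp [him]⟩]
    constructor <;> linarith [pi_pos]
  · have h₁ : arg (1 - z) < 0 := arg_neg_iff.2 (by linarith)
    have h₂ : 0 ≤ arg (1 + z) := arg_nonneg_iff.2 (by linarith)
    constructor <;> linarith [neg_pi_lt_arg (1 - z), arg_le_pi (1 + z)]

theorem one_sub_sq_cpow_half_of_mem_Dslit (hz : z ∈ Dslit) :
    (1 - z ^ 2) ^ ((1 : ℂ) / 2) = (1 - z) ^ ((1 : ℂ) / 2) * (1 + z) ^ ((1 : ℂ) / 2) := by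
  rw [show 1 - z ^ 2 = (1 - z) * (1 + z) by ring]
  exact mul_cpow_of_arg_add_arg_mem (sub_ne_zero.2 (ne_one_of_mem_Dslit hz).symm)
    (fun h => ne_neg_one_of_mem_Dslit hz (by linear_combination h))
    (arg_one_sub_add_arg_one_add_mem_Ioc hz) _

theorem K0C_sub_one_div_cpow_half_of_mem_Dslit (hz : z ∈ Dslit) :
    (K0C z - 1) / (1 - z) ^ ((1 : ℂ) / 2) =
      I / π * dslope Complex.log 1 (z + I * ((1 - z) ^ ((1 : ℂ) / 2) * (1 + z) ^ ((1 : ℂ) / 2))) *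
        (I * (1 + z) ^ ((1 : ℂ) / 2) - (1 - z) ^ ((1 : ℂ) / 2)) := by
  set s := (1 - z) ^ ((1 : ℂ) / 2)
  set t := (1 + z) ^ ((1 : ℂ) / 2)
  have hs : s ≠ 0 := by
    simp [s, cpow_eq_zero_iff, sub_eq_zero, (ne_one_of_mem_Dslit hz).symm]
  have hlog : Complex.log (z + I * (s * t)) =
      s * (I * t - s) * dslope Complex.log 1 (z + I * (s * t)) := by
    have h := sub_smul_dslope Complex.log 1 (z + I * (s * t))
    rw [Complex.log_one, sub_zero, smul_eq_mul] at h
    rw [← h]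
    linear_combination (dslope Complex.log 1 (z + I * (s * t))) * cpow_half_sq (1 - z)
  have hpi : (π : ℂ) ≠ 0 := ofReal_ne_zero.2 pi_ne_zero
  rw [K0C, one_sub_sq_cpow_half_of_mem_Dslit hz, hlog]
  field_simp
  ring

end Dslit

theorem tendsto_dslope_log_mul_nhds_one :
    Tendsto (fun z : ℂ =>
      I / π * dslope Complex.log 1 (z + I * ((1 - z) ^ ((1 : ℂ) / 2) * (1 + z) ^ ((1 : ℂ) / 2))) *
        (I * (1 + z) ^ ((1 : ℂ) / 2) - (1 - z) ^ ((1 : ℂ) / 2)))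
      (𝓝 1) (𝓝 ((-(√2 / π) : ℝ) : ℂ)) := by
  have hs : ContinuousAt (fun z : ℂ => (1 - z) ^ ((1 : ℂ) / 2)) 1 :=
    (continuousAt_cpow_const_of_re_pos (Or.inl (by simp)) (by norm_num)).comp
      (continuousAt_const.sub continuousAt_id)
  have ht : ContinuousAt (fun z : ℂ => (1 + z) ^ ((1 : ℂ) / 2)) 1 :=
    (continuousAt_const.add continuousAt_id).cpow continuousAt_const (by simp [mem_slitPlane_iff])
  have hs1 : (1 - 1 : ℂ) ^ ((1 : ℂ) / 2) = 0 := by simp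
  have ht1 : (1 + 1 : ℂ) ^ ((1 : ℂ) / 2) = (√2 : ℝ) := by rw [one_add_one_eq_two, two_cpow_half]
  have hu : ContinuousAt
      (fun z : ℂ => z + I * ((1 - z) ^ ((1 : ℂ) / 2) * (1 + z) ^ ((1 : ℂ) / 2))) 1 :=
    continuousAt_id.add (continuousAt_const.mul (hs.mul ht))
  convert ContinuousAt.tendsto ?_ using 2
  · rw [hs1, ht1, zero_mul, mul_zero, add_zero, dslope_log_one_same, sub_zero]
    push_cast
    field_simp
    linear_combination -I_sq
  · exact (continuousAt_const.mul (continuousAt_dslope_log_one.comp_of_eq hu (by simp))).mul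
      ((continuousAt_const.mul ht).sub hs)

theorem k0_expansion_at_one :
    Tendsto (fun z : ℂ => (K0C z - 1) / ((1 - z) ^ ((1 : ℂ) / 2)))
      (nhdsWithin 1 Dslit)
      (nhds ((-(Real.sqrt 2 / Real.pi) : ℝ) : ℂ)) :=
  (tendsto_dslope_log_mul_nhds_one.mono_left nhdsWithin_le_nhds).congr'
    (eventually_nhdsWithin_of_forall fun _ hz => (K0C_sub_one_div_cpow_half_of_mem_Dslit hz).symm)
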